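/- The generating function G(z, x) := E ( z^{|𝒯|} Σ_{v ∈ 𝒯} x^{d(v, o)} ), defined for |z|, |x| < 1, satisfies the closed-form identity G(z, x) = F(z) / (1 − z x Φ'(F(z))). -/

import Mathlib

open scoped ENNReal BigOperators
open Set Filter

/-- Plane (ordered rooted) trees. -/
inductive PlaneTree : Type
  | node : List PlaneTree → PlaneTree

namespace PlaneTree

/-- The list of subtrees hanging off the root. -/
def children : PlaneTree → List PlaneTree
  | .node ts => ts

/-- The subtree rooted at a given position (sequence of child indices), if it exists. -/
def subtreeAt : PlaneTree → List ℕ → Option PlaneTree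
  | t, [] => some t
  | .node ts, i :: q =>
    match ts[i]? with
    | some t' => subtreeAt t' q
    | none => none

/-- The vertex set of a tree, with vertices identified with their positions. -/
def vertexSet (t : PlaneTree) : Set (List ℕ) := {q | (subtreeAt t q).isSome}

/-- The number of vertices of a tree. -/
noncomputable def size (t : PlaneTree) : ℕ := (vertexSet t).ncard

/-- The number of children of the vertex at position `q`. -/
def childCount (t : PlaneTree) (q : List ℕ) : ℕ :=
  ((subtreeAt t q).map fun t' => t'.children.length).getD 0

end PlaneTree

/-- Longest common prefix of two positions; this is the position of the last common
ancestor of the two vertices. -/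
def lca : List ℕ → List ℕ → List ℕ
  | a :: as, b :: bs => if a = b then a :: lca as bs else []
  | _, _ => []

/-- The distance from `v` up to the last common ancestor of `v` and `w`. -/
def dUp (v w : List ℕ) : ℕ := v.length - (lca v w).length

/-- The graph distance between the vertices at positions `v` and `w`. -/
def treeDist (v w : List ℕ) : ℕ := dUp v w + dUp w v

/-- The Galton–Watson probability of a given finite tree: the product, over all vertices,
of the probability that the offspring distribution takes the value given by the number of
children of the vertex. -/
noncomputable def gwProb (p : ℕ → ℝ≥0∞) (t : PlaneTree) : ℝ≥0∞ :=
  ∏ᶠ v ∈ PlaneTree.vertexSet t, p (PlaneTree.childCount t v)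

/-- `P(|𝒯| = n)` for the Galton–Watson tree `𝒯`. -/
noncomputable def probSize (p : ℕ → ℝ≥0∞) (n : ℕ) : ℝ≥0∞ :=
  ∑' t : PlaneTree, if PlaneTree.size t = n then gwProb p t else 0

/-- `E f(T_n)` where `T_n` is the Galton–Watson tree conditioned to have `n` vertices. -/
noncomputable def condExp (p : ℕ → ℝ≥0∞) (n : ℕ) (f : PlaneTree → ℝ≥0∞) : ℝ≥0∞ :=
  (∑' t : PlaneTree, if PlaneTree.size t = n then gwProb p t * f t else 0) / probSize p n

/-- The variance of the offspring distribution `p` (which has mean `1`). -/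
noncomputable def xiVar (p : ℕ → ℝ≥0∞) : ℝ≥0∞ :=
  ∑' k : ℕ, p k * ENNReal.ofReal (((k : ℝ) - 1) ^ 2)

/-- `P_k(t)`: the number of unordered pairs of vertices of `t` at graph distance `k`. -/
noncomputable def pairCount (t : PlaneTree) (k : ℕ) : ℕ :=
  {s : Set (List ℕ) | ∃ v w, v ∈ PlaneTree.vertexSet t ∧ w ∈ PlaneTree.vertexSet t ∧
    s = {v, w} ∧ treeDist v w = k}.ncard

/-- `F(z) = E z^{|𝒯|}`, the probability generating function of the total progeny. -/
noncomputable def Fgen (p : ℕ → ℝ≥0∞) (z : ℂ) : ℂ :=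
  ∑' t : PlaneTree, ((gwProb p t).toReal : ℂ) * z ^ PlaneTree.size t

/-- `Φ'(w)`, the derivative of the probability generating function `Φ(w) = E w^ξ` of the
offspring distribution. -/
noncomputable def PhiDeriv (p : ℕ → ℝ≥0∞) (w : ℂ) : ℂ :=
  ∑' k : ℕ, (k : ℂ) * ((p k).toReal : ℂ) * w ^ (k - 1)

/-- `G(z, x) = E (z^{|𝒯|} ∑_{v ∈ 𝒯} x^{d(v, o)})`, where `o` is the root. -/
noncomputable def Ggen (p : ℕ → ℝ≥0∞) (z x : ℂ) : ℂ :=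
  ∑' t : PlaneTree, ((gwProb p t).toReal : ℂ) * z ^ PlaneTree.size t *
    ∑ᶠ v ∈ PlaneTree.vertexSet t, x ^ v.length

/-!
Cutting a plane tree at its root identifies it with the tuple `(t₁, …, t_k)` of its subtrees.
Under this identification the Galton–Watson weight becomes `p k * ∏ gwProb tᵢ`, the size becomes
`1 + ∑ |tᵢ|`, and the depth sum becomes `1 + x * ∑ depthSum x tᵢ`. Summing over `k` and over
the tuples, the first two facts give `F = z Φ(F)`; with the third, the sum splits further
according to which of the `k` subtrees contains the vertex being counted, giving
`G = F + z x Φ'(F) G`. Because `|z x Φ'(F)| < 1`, this equation can be solved for `G`.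

Every rearrangement is justified by absolute convergence, and that rests on the total
Galton–Watson mass being at most `1`. This bound is proved by induction on the mass of the
trees with at most `n` vertices: the subtrees of such a tree with `n + 1` vertices have at most
`n` vertices each.
-/

namespace PlaneTree

lemma subtreeAt_node_ofFn_cons {k : ℕ} (v : Fin k → PlaneTree) (i : ℕ) (q : List ℕ) :
    subtreeAt (node (List.ofFn v)) (i :: q) =
      if hi : i < k then subtreeAt (v ⟨i, hi⟩) q else none := by
  by_cases hi : i < k <;> simp [subtreeAt, hi]

lemma vertexSet_node_ofFn {k : ℕ} (v : Fin k → PlaneTree) :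
    vertexSet (node (List.ofFn v)) = insert [] (⋃ i, List.cons i.1 '' vertexSet (v i)) := by
  ext (_ | ⟨i, q⟩)
  · simp [vertexSet, subtreeAt]
  · simp only [vertexSet, mem_ofPred_eq, subtreeAt_node_ofFn_cons, mem_insert_iff,
      reduceCtorEq, mem_iUnion, mem_image, List.cons.injEq, false_or]
    constructor
    · intro h
      split_ifs at h with hi
      · exact ⟨⟨i, hi⟩, q, h, rfl, rfl⟩
      · simp at h
    · rintro ⟨j, q, hq, rfl, rfl⟩
      simpa using hq

lemma vertexSet_finite : ∀ t : PlaneTree, (vertexSet t).Finite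
  | node ts => by
    rw [← List.ofFn_get ts, vertexSet_node_ofFn]
    exact .insert _ (finite_iUnion fun i => (vertexSet_finite (ts.get i)).image _)
  decreasing_by exact List.sizeOf_lt_of_mem (List.get_mem ts i) |>.trans_le (by simp)

@[to_additive]
lemma finprod_mem_vertexSet_node_ofFn {M : Type*} [CommMonoid M] {k : ℕ}
    (v : Fin k → PlaneTree) (f : List ℕ → M) :
    ∏ᶠ q ∈ vertexSet (node (List.ofFn v)), f q =
      f [] * ∏ i, ∏ᶠ q ∈ vertexSet (v i), f (i.1 :: q) := by
  have hdisj :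
      Pairwise (Function.onFun Disjoint fun i : Fin k => List.cons i.1 '' vertexSet (v i)) := by
    intro i j hij
    simp only [Function.onFun, disjoint_left, mem_image]
    rintro _ ⟨q, -, rfl⟩ ⟨q', -, h⟩
    exact hij (Fin.ext (List.cons.inj h).1.symm)
  rw [vertexSet_node_ofFn, finprod_mem_insert _ (by simp)
    (finite_iUnion fun i => (vertexSet_finite _).image _),
    finprod_mem_iUnion hdisj fun i => (vertexSet_finite _).image _, finprod_eq_prod_of_fintype]
  simp only [finprod_mem_image List.cons_injective.injOn]

lemma size_node_ofFn {k : ℕ} (v : Fin k → PlaneTree) :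
    size (node (List.ofFn v)) = 1 + ∑ i, size (v i) := by
  simp only [size, ← finsum_one, finsum_mem_vertexSet_node_ofFn]

lemma one_le_size (t : PlaneTree) : 1 ≤ size t := by
  rw [size, Nat.one_le_iff_ne_zero, Ne, ncard_eq_zero (vertexSet_finite t)]
  exact Set.nonempty_iff_ne_empty.mp ⟨[], by simp [vertexSet, subtreeAt]⟩

lemma childCount_node_ofFn_nil {k : ℕ} (v : Fin k → PlaneTree) :
    childCount (node (List.ofFn v)) [] = k := by
  simp [childCount, subtreeAt, children]

lemma childCount_node_ofFn_cons {k : ℕ} (v : Fin k → PlaneTree) (i : Fin k) (q : List ℕ) :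
    childCount (node (List.ofFn v)) (i.1 :: q) = childCount (v i) q := by
  simp [childCount, subtreeAt_node_ofFn_cons]

noncomputable def depthSum (x : ℂ) (t : PlaneTree) : ℂ := ∑ᶠ q ∈ vertexSet t, x ^ q.length

lemma depthSum_node_ofFn (x : ℂ) {k : ℕ} (v : Fin k → PlaneTree) :
    depthSum x (node (List.ofFn v)) = 1 + x * ∑ i, depthSum x (v i) := by
  simp only [depthSum, finsum_mem_vertexSet_node_ofFn, List.length_nil, pow_zero,
    List.length_cons, pow_succ', Finset.mul_sum, mul_finsum_mem]

lemma norm_depthSum_le_size {x : ℂ} (hx : ‖x‖ ≤ 1) (t : PlaneTree) :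
    ‖depthSum x t‖ ≤ size t := by
  rw [depthSum, finsum_mem_eq_finite_toFinset_sum _ (vertexSet_finite t), size,
    ncard_eq_toFinset_card _ (vertexSet_finite t)]
  calc _ ≤ ∑ _q ∈ (vertexSet_finite t).toFinset, (1 : ℝ) :=
        norm_sum_le_of_le _ fun q _ => by rw [norm_pow]; exact pow_le_one₀ (norm_nonneg x) hx
    _ = _ := by simp

def equivSigmaTuple : (Σ k, Fin k → PlaneTree) ≃ PlaneTree :=
  List.equivSigmaTuple.symm.trans ⟨node, children, fun _ => rfl, fun | node _ => rfl⟩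

lemma tsum_eq_tsum_node_ofFn {E : Type*} [NormedAddCommGroup E] [CompleteSpace E]
    {u : PlaneTree → E} (hu : Summable u) :
    ∑' t, u t = ∑' k, ∑' v : Fin k → PlaneTree, u (node (List.ofFn v)) := by
  rw [← equivSigmaTuple.tsum_eq]
  exact (equivSigmaTuple.summable_iff.mpr hu).tsum_sigma

end PlaneTree

open PlaneTree

lemma Fin.prod_consEquiv {M α : Type*} [CommMonoid M] {n : ℕ} (f : Fin (n + 1) → α → M)
    (q : α × (Fin n → α)) :
    ∏ i, f i (Fin.consEquiv (fun _ => α) q i) = f 0 q.1 * ∏ i : Fin n, f i.succ (q.2 i) := by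
  simp [Fin.prod_univ_succ, Fin.consEquiv]

lemma ENNReal.tsum_pi_prod {α : Type*} :
    ∀ {n : ℕ} (f : Fin n → α → ℝ≥0∞), ∑' g : Fin n → α, ∏ i, f i (g i) = ∏ i, ∑' a, f i a
  | 0, f => by simp
  | n + 1, f => by
    rw [← (Fin.consEquiv fun _ => α).tsum_eq, tsum_congr (Fin.prod_consEquiv f),
      ENNReal.tsum_prod', Fin.prod_univ_succ, ← ENNReal.tsum_pi_prod, ← ENNReal.tsum_mul_right]
    simp only [ENNReal.tsum_mul_left]

section GaltonWatson

variable (p : ℕ → ℝ≥0∞)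

lemma gwProb_node_ofFn {k : ℕ} (v : Fin k → PlaneTree) :
    gwProb p (node (List.ofFn v)) = p k * ∏ i, gwProb p (v i) := by
  simp only [gwProb, finprod_mem_vertexSet_node_ofFn, childCount_node_ofFn_nil,
    childCount_node_ofFn_cons]

noncomputable def gwMassSizeLE (n : ℕ) : ℝ≥0∞ :=
  ∑' t, if size t ≤ n then gwProb p t else 0

lemma gwMassSizeLE_zero : gwMassSizeLE p 0 = 0 := by
  simp [gwMassSizeLE, Nat.ne_zero_of_lt (one_le_size _)]

lemma gwMassSizeLE_succ_le (n : ℕ) :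
    gwMassSizeLE p (n + 1) ≤ ∑' k, p k * gwMassSizeLE p n ^ k := by
  rw [gwMassSizeLE, ← equivSigmaTuple.tsum_eq, ENNReal.tsum_sigma']
  refine ENNReal.tsum_le_tsum fun k => ?_
  have hroot : ∀ v : Fin k → PlaneTree,
      (if size (node (List.ofFn v)) ≤ n + 1 then gwProb p (node (List.ofFn v)) else 0) ≤
        p k * ∏ i, if size (v i) ≤ n then gwProb p (v i) else 0 := by
    intro v
    split_ifs with h
    · have hsub : ∀ i, size (v i) ≤ n := fun i => by
        have := Finset.single_le_sum (fun j _ => Nat.zero_le (size (v j))) (Finset.mem_univ i)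
        rw [size_node_ofFn] at h
        omega
      simp [gwProb_node_ofFn, hsub]
    · exact zero_le
  calc _ ≤ _ := ENNReal.tsum_le_tsum hroot
    _ = p k * gwMassSizeLE p n ^ k := by
      rw [ENNReal.tsum_mul_left,
        ENNReal.tsum_pi_prod fun _ t => if size t ≤ n then gwProb p t else 0,
        Finset.prod_const, Finset.card_fin]
      rfl

variable {p}

lemma gwMassSizeLE_le_one (hp : ∑' k, p k ≤ 1) (n : ℕ) : gwMassSizeLE p n ≤ 1 := by
  induction n with
  | zero => simp [gwMassSizeLE_zero]
  | succ n ih =>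
    calc _ ≤ ∑' k, p k * gwMassSizeLE p n ^ k := gwMassSizeLE_succ_le p n
      _ ≤ ∑' k, p k := ENNReal.tsum_le_tsum fun k => mul_le_of_le_one_right' (pow_le_one' ih k)
      _ ≤ 1 := hp

lemma tsum_gwProb_le_one (hp : ∑' k, p k ≤ 1) : ∑' t, gwProb p t ≤ 1 := by
  rw [ENNReal.tsum_eq_iSup_sum]
  refine iSup_le fun s => ?_
  calc ∑ t ∈ s, gwProb p t = ∑ t ∈ s, if size t ≤ s.sup size then gwProb p t else 0 :=
        Finset.sum_congr rfl fun t ht => (if_pos (Finset.le_sup ht)).symm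
    _ ≤ gwMassSizeLE p (s.sup size) := ENNReal.sum_le_tsum s
    _ ≤ 1 := gwMassSizeLE_le_one hp _

end GaltonWatson

section PiProd

variable {R α : Type*} [NormedCommRing R]

lemma summable_norm_pi_prod :
    ∀ {n : ℕ} {f : Fin n → α → R}, (∀ i, Summable fun a => ‖f i a‖) →
      Summable fun g : Fin n → α => ‖∏ i, f i (g i)‖
  | 0, _, _ => .of_finite
  | n + 1, f, hf => by
    rw [← (Fin.consEquiv fun _ => α).summable_iff]
    simpa only [Function.comp_def, Fin.prod_consEquiv] using
      (hf 0).mul_norm (summable_norm_pi_prod fun i => hf i.succ)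

variable [CompleteSpace R]

lemma tsum_pi_prod_of_summable_norm :
    ∀ {n : ℕ} {f : Fin n → α → R}, (∀ i, Summable fun a => ‖f i a‖) →
      ∑' g : Fin n → α, ∏ i, f i (g i) = ∏ i, ∑' a, f i a
  | 0, _, _ => by simp
  | n + 1, f, hf => by
    rw [← (Fin.consEquiv fun _ => α).tsum_eq, tsum_congr (Fin.prod_consEquiv f),
      ← tsum_mul_tsum_of_summable_norm (hf 0) (summable_norm_pi_prod fun i => hf i.succ),
      tsum_pi_prod_of_summable_norm fun i => hf i.succ, Fin.prod_univ_succ]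

lemma tsum_pi_prod_mul_apply {n : ℕ} {a b : α → R} (ha : Summable fun x => ‖a x‖)
    (hab : Summable fun x => ‖a x * b x‖) (i : Fin n) :
    (Summable fun g : Fin n → α => (∏ j, a (g j)) * b (g i)) ∧
      ∑' g : Fin n → α, (∏ j, a (g j)) * b (g i) =
        (∑' x, a x * b x) * (∑' x, a x) ^ (n - 1) := by
  classical
  set f : Fin n → α → R := Function.update (fun _ => a) i fun x => a x * b x
  have hf : ∀ j, Summable fun x => ‖f j x‖ := by
    intro j
    rcases eq_or_ne j i with rfl | hj
    · simpa [f] using hab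
    · simpa [f, hj] using ha
  have hf_compl : ∀ j ∈ ({i}ᶜ : Finset (Fin n)), f j = a := fun j hj => by
    simp only [f, Function.update_of_ne (by simpa using hj)]
  have hprod : ∀ g : Fin n → α, (∏ j, a (g j)) * b (g i) = ∏ j, f j (g j) := by
    intro g
    rw [Fintype.prod_eq_mul_prod_compl i, Fintype.prod_eq_mul_prod_compl i (fun j => f j (g j)),
      Finset.prod_congr rfl fun j hj => congrFun (hf_compl j hj) (g j)]
    simp only [f, Function.update_self]
    ring
  have htsum : ∏ j, ∑' x, f j x = (∑' x, a x * b x) * (∑' x, a x) ^ (n - 1) := by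
    rw [Fintype.prod_eq_mul_prod_compl i, Finset.prod_congr rfl fun j hj => by rw [hf_compl j hj],
      Finset.prod_const, Finset.card_compl, Finset.card_singleton, Fintype.card_fin]
    simp only [f, Function.update_self]
  simp only [hprod]
  exact ⟨(summable_norm_pi_prod hf).of_norm, by rw [tsum_pi_prod_of_summable_norm hf, htsum]⟩

end PiProd

lemma ENNReal.tsum_toReal_le_one {ι : Type*} {f : ι → ℝ≥0∞} (hf : ∑' i, f i ≤ 1) :
    ∑' i, (f i).toReal ≤ 1 := by
  rw [← ENNReal.tsum_toReal_eq
    (ENNReal.ne_top_of_tsum_ne_top (ne_top_of_le_ne_top one_ne_top hf))]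
  exact ENNReal.toReal_le_of_le_ofReal zero_le_one (by simpa using hf)

lemma ENNReal.summable_toReal_of_tsum_le_one {ι : Type*} {f : ι → ℝ≥0∞} (hf : ∑' i, f i ≤ 1) :
    Summable fun i => (f i).toReal :=
  ENNReal.summable_toReal (ne_top_of_le_ne_top one_ne_top hf)

section GeneratingFunctions

variable {p : ℕ → ℝ≥0∞}

variable (p) in
noncomputable def gwTerm (z : ℂ) (t : PlaneTree) : ℂ := ((gwProb p t).toReal : ℂ) * z ^ size t

lemma norm_gwTerm (z : ℂ) (t : PlaneTree) :
    ‖gwTerm p z t‖ = (gwProb p t).toReal * ‖z‖ ^ size t := by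
  simp [gwTerm]

lemma gwTerm_node_ofFn (z : ℂ) {k : ℕ} (v : Fin k → PlaneTree) :
    gwTerm p z (node (List.ofFn v)) = ((p k).toReal : ℂ) * z * ∏ i, gwTerm p z (v i) := by
  simp only [gwTerm, gwProb_node_ofFn, size_node_ofFn, ENNReal.toReal_mul, ENNReal.toReal_prod,
    Complex.ofReal_mul, Complex.ofReal_prod, pow_add, pow_one, ← Finset.prod_pow_eq_pow_sum,
    Finset.prod_mul_distrib]
  ring

lemma summable_norm_gwTerm (hp : ∑' k, p k ≤ 1) {z : ℂ} (hz : ‖z‖ ≤ 1) :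
    Summable fun t => ‖gwTerm p z t‖ := by
  refine (ENNReal.summable_toReal_of_tsum_le_one (tsum_gwProb_le_one hp)).of_nonneg_of_le
    (fun t => norm_nonneg _) fun t => ?_
  rw [norm_gwTerm]
  exact mul_le_of_le_one_right ENNReal.toReal_nonneg (pow_le_one₀ (norm_nonneg z) hz)

lemma summable_norm_gwTerm_mul_depthSum (hp : ∑' k, p k ≤ 1) {z x : ℂ} (hz : ‖z‖ < 1)
    (hx : ‖x‖ ≤ 1) : Summable fun t => ‖gwTerm p z t * depthSum x t‖ := by
  obtain ⟨C, hC⟩ := (tendsto_self_mul_const_pow_of_lt_one (norm_nonneg z) hz).bddAbove_range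
  refine ((ENNReal.summable_toReal_of_tsum_le_one (tsum_gwProb_le_one hp)).mul_right C
    ).of_nonneg_of_le (fun t => norm_nonneg _) fun t => ?_
  rw [norm_mul, norm_gwTerm, mul_assoc]
  gcongr
  calc ‖z‖ ^ size t * ‖depthSum x t‖ ≤ ‖z‖ ^ size t * size t := by
        gcongr; exact norm_depthSum_le_size hx t
    _ ≤ C := by rw [mul_comm]; exact hC ⟨size t, rfl⟩

lemma norm_Fgen_le_one (hp : ∑' k, p k ≤ 1) {z : ℂ} (hz : ‖z‖ ≤ 1) : ‖Fgen p z‖ ≤ 1 :=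
  calc ‖Fgen p z‖ ≤ ∑' t, ‖gwTerm p z t‖ := norm_tsum_le_tsum_norm (summable_norm_gwTerm hp hz)
    _ ≤ ∑' t, (gwProb p t).toReal := by
        refine (summable_norm_gwTerm hp hz).tsum_le_tsum (fun t => ?_)
          (ENNReal.summable_toReal_of_tsum_le_one (tsum_gwProb_le_one hp))
        rw [norm_gwTerm]
        exact mul_le_of_le_one_right ENNReal.toReal_nonneg (pow_le_one₀ (norm_nonneg z) hz)
    _ ≤ 1 := ENNReal.tsum_toReal_le_one (tsum_gwProb_le_one hp)

lemma Fgen_eq_tsum_gwTerm (z : ℂ) : Fgen p z = ∑' t, gwTerm p z t := rfl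

lemma Ggen_eq_tsum_gwTerm_mul_depthSum (z x : ℂ) :
    Ggen p z x = ∑' t, gwTerm p z t * depthSum x t := rfl

lemma summable_offspring_pow (hp : ∑' k, p k ≤ 1) {w : ℂ} (hw : ‖w‖ ≤ 1) :
    Summable fun k => ((p k).toReal : ℂ) * w ^ k :=
  .of_norm_bounded (ENNReal.summable_toReal_of_tsum_le_one hp) fun k => by
    simpa using mul_le_of_le_one_right ENNReal.toReal_nonneg (pow_le_one₀ (norm_nonneg w) hw)

lemma norm_natCast_mul_offspring_pow_le {w : ℂ} (hw : ‖w‖ ≤ 1) (k : ℕ) :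
    ‖(k : ℂ) * ((p k).toReal : ℂ) * w ^ (k - 1)‖ ≤ ((k : ℝ≥0∞) * p k).toReal := by
  rw [norm_mul, norm_mul, norm_pow, Complex.norm_natCast, Complex.norm_real, Real.norm_eq_abs,
    abs_of_nonneg ENNReal.toReal_nonneg, ENNReal.toReal_mul, ENNReal.toReal_natCast]
  exact mul_le_of_le_one_right (by positivity) (pow_le_one₀ (norm_nonneg w) hw)

lemma summable_natCast_mul_offspring_pow (hmean : ∑' k : ℕ, (k : ℝ≥0∞) * p k ≤ 1) {w : ℂ}
    (hw : ‖w‖ ≤ 1) : Summable fun k : ℕ => (k : ℂ) * ((p k).toReal : ℂ) * w ^ (k - 1) :=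
  .of_norm_bounded (ENNReal.summable_toReal_of_tsum_le_one hmean)
    (norm_natCast_mul_offspring_pow_le hw)

lemma norm_PhiDeriv_le_one (hmean : ∑' k : ℕ, (k : ℝ≥0∞) * p k ≤ 1) {w : ℂ} (hw : ‖w‖ ≤ 1) :
    ‖PhiDeriv p w‖ ≤ 1 :=
  (tsum_of_norm_bounded (ENNReal.summable_toReal_of_tsum_le_one hmean).hasSum
    (norm_natCast_mul_offspring_pow_le hw)).trans (ENNReal.tsum_toReal_le_one hmean)

lemma Fgen_eq_mul_tsum (hp : ∑' k, p k ≤ 1) {z : ℂ} (hz : ‖z‖ ≤ 1) :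
    Fgen p z = z * ∑' k, ((p k).toReal : ℂ) * Fgen p z ^ k := by
  have hF := summable_norm_gwTerm hp hz
  rw [← tsum_mul_left]
  conv_lhs => rw [Fgen_eq_tsum_gwTerm, tsum_eq_tsum_node_ofFn hF.of_norm]
  refine tsum_congr fun k => ?_
  simp_rw [gwTerm_node_ofFn, tsum_mul_left, tsum_pi_prod_of_summable_norm fun _ => hF,
    Finset.prod_const, Finset.card_fin, ← Fgen_eq_tsum_gwTerm]
  ring

lemma tsum_gwTerm_mul_depthSum_node_ofFn (hp : ∑' k, p k ≤ 1) {z x : ℂ} (hz : ‖z‖ < 1)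
    (hx : ‖x‖ ≤ 1) (k : ℕ) :
    ∑' v : Fin k → PlaneTree,
        gwTerm p z (node (List.ofFn v)) * depthSum x (node (List.ofFn v)) =
      z * (((p k).toReal : ℂ) * Fgen p z ^ k) +
        z * x * Ggen p z x * ((k : ℂ) * ((p k).toReal : ℂ) * Fgen p z ^ (k - 1)) := by
  have hF := summable_norm_gwTerm hp hz.le
  have hpick := fun i : Fin k =>
    tsum_pi_prod_mul_apply hF (summable_norm_gwTerm_mul_depthSum hp hz hx) i
  have hsplit : ∀ v : Fin k → PlaneTree,
      gwTerm p z (node (List.ofFn v)) * depthSum x (node (List.ofFn v)) =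
        ((p k).toReal : ℂ) * z * ∏ i, gwTerm p z (v i) +
          ((p k).toReal : ℂ) * z * x * ∑ i, (∏ j, gwTerm p z (v j)) * depthSum x (v i) := by
    intro v
    rw [gwTerm_node_ofFn, depthSum_node_ofFn, ← Finset.mul_sum]
    ring
  rw [tsum_congr hsplit, Summable.tsum_add ((summable_norm_pi_prod fun _ => hF).of_norm.mul_left _)
      ((summable_sum fun i _ => (hpick i).1).mul_left _), tsum_mul_left, tsum_mul_left,
    tsum_pi_prod_of_summable_norm fun _ => hF, Summable.tsum_finsetSum fun i _ => (hpick i).1]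
  simp only [(hpick _).2, Finset.prod_const, Finset.sum_const, Finset.card_univ,
    Fintype.card_fin, nsmul_eq_mul, ← Fgen_eq_tsum_gwTerm, ← Ggen_eq_tsum_gwTerm_mul_depthSum]
  ring

lemma Ggen_eq_Fgen_add (hp : ∑' k, p k ≤ 1) (hmean : ∑' k : ℕ, (k : ℝ≥0∞) * p k ≤ 1) {z x : ℂ}
    (hz : ‖z‖ < 1) (hx : ‖x‖ ≤ 1) :
    Ggen p z x = Fgen p z + z * x * PhiDeriv p (Fgen p z) * Ggen p z x := by
  have hF := norm_Fgen_le_one hp hz.le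
  calc Ggen p z x = ∑' k, ∑' v : Fin k → PlaneTree,
        gwTerm p z (node (List.ofFn v)) * depthSum x (node (List.ofFn v)) :=
        tsum_eq_tsum_node_ofFn (summable_norm_gwTerm_mul_depthSum hp hz hx).of_norm
    _ = ∑' k, (z * (((p k).toReal : ℂ) * Fgen p z ^ k) +
          z * x * Ggen p z x * ((k : ℂ) * ((p k).toReal : ℂ) * Fgen p z ^ (k - 1))) :=
        tsum_congr (tsum_gwTerm_mul_depthSum_node_ofFn hp hz hx)
    _ = _ := by
        rw [Summable.tsum_add ((summable_offspring_pow hp hF).mul_left z)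
            ((summable_natCast_mul_offspring_pow hmean hF).mul_left _), tsum_mul_left,
          tsum_mul_left, ← Fgen_eq_mul_tsum hp hz.le, PhiDeriv]
        ring

end GeneratingFunctions

theorem Ggen_eq_general
    (p : ℕ → ℝ≥0∞) (hp : ∑' k : ℕ, p k = 1)
    (hmean : ∑' k : ℕ, (k : ℝ≥0∞) * p k = 1) :
    ∀ z x : ℂ, ‖z‖ < 1 → ‖x‖ < 1 →
      Ggen p z x = Fgen p z / (1 - z * x * PhiDeriv p (Fgen p z)) := by
  intro z x hz hx
  have hΦ := norm_PhiDeriv_le_one hmean.le (norm_Fgen_le_one hp.le hz.le)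
  have hsmall : ‖z * x * PhiDeriv p (Fgen p z)‖ < 1 := by
    rw [norm_mul, norm_mul]
    calc _ ≤ ‖z‖ * 1 * 1 := by gcongr
      _ < 1 := by simpa using hz
  have hne : 1 - z * x * PhiDeriv p (Fgen p z) ≠ 0 :=
    sub_ne_zero.mpr fun h => by simp [← h] at hsmall
  rw [eq_div_iff hne]
  linear_combination Ggen_eq_Fgen_add hp.le hmean.le hz hx.le

/-- formula (4.1) of Devroye–Janson.
`G(z, x) = F(z) / (1 - z x Φ'(F(z)))` for `|z|, |x| < 1`. -/
theorem Ggen_eq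
    (p : ℕ → ℝ≥0∞) (hp : ∑' k : ℕ, p k = 1)
    (hmean : ∑' k : ℕ, (k : ℝ≥0∞) * p k = 1)
    (hvar_pos : 0 < xiVar p) (hvar_fin : xiVar p ≠ ⊤) :
    ∀ z x : ℂ, ‖z‖ < 1 → ‖x‖ < 1 →
      Ggen p z x = Fgen p z / (1 - z * x * PhiDeriv p (Fgen p z)) :=
  Ggen_eq_general p hp hmean
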